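/- arXiv:1909.07761 — 4 statements merged into one kernel-verified Lean document; each statement's English description precedes it below -/
import Mathlib

section
/- Let A be the free GCDA over ℚ on generators e₁,…,e₆ of degree 1 and e₇ of degree 2, with differential d(e₁) = −e₁e₆, d(e₂) = −e₂e₆, d(e₃) = −e₃e₆, d(e₄) = −e₅e₆, and d(e₅) = d(e₆) = d(e₇) = 0. Then H¹(A) is 2-dimensional with basis the classes of e₅ and e₆. -/
/-- Let `A` be the free GCDA on generators `e1, …, e6` of degree 1
and `e7` of degree 2, with `d e1 = -e1*e6`, `d e2 = -e2*e6`, `d e3 = -e3*e6`,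
`d e4 = -e5*e6`, `d e5 = d e6 = d e7 = 0`.  Then `H¹(A)` is 2-dimensional with
basis the classes of `e5` and `e6`.  (Freeness of `A` in the relevant degrees
is expressed by the spanning and linear-independence hypotheses.) -/
theorem stmt_8 {A : Type*} [Ring A] [Algebra ℚ A]
    (𝒜 : ℕ → Submodule ℚ A) [GradedAlgebra 𝒜]
    (d : A →ₗ[ℚ] A)
    (hd2 : ∀ a, d (d a) = 0)
    (hddeg : ∀ i, ∀ a ∈ 𝒜 i, d a ∈ 𝒜 (i + 1))
    (hcomm : ∀ (i j : ℕ) (a b : A), a ∈ 𝒜 i → b ∈ 𝒜 j →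
      a * b = ((-1 : ℚ)) ^ (i * j) • (b * a))
    (hleib : ∀ (i : ℕ) (a b : A), a ∈ 𝒜 i →
      d (a * b) = d a * b + ((-1 : ℚ)) ^ i • (a * d b))
    (e1 e2 e3 e4 e5 e6 e7 : A)
    (he1 : e1 ∈ 𝒜 1) (he2 : e2 ∈ 𝒜 1) (he3 : e3 ∈ 𝒜 1) (he4 : e4 ∈ 𝒜 1)
    (he5 : e5 ∈ 𝒜 1) (he6 : e6 ∈ 𝒜 1) (he7 : e7 ∈ 𝒜 2)
    (hconn : 𝒜 0 = (1 : Submodule ℚ A))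
    (hspan1 : 𝒜 1 = Submodule.span ℚ (Set.range ![e1, e2, e3, e4, e5, e6]))
    (hind1 : LinearIndependent ℚ ![e1, e2, e3, e4, e5, e6])
    (hind2 : LinearIndependent ℚ ![e1 * e6, e2 * e6, e3 * e6, e5 * e6])
    (hde1 : d e1 = -(e1 * e6)) (hde2 : d e2 = -(e2 * e6))
    (hde3 : d e3 = -(e3 * e6)) (hde4 : d e4 = -(e5 * e6))
    (hde5 : d e5 = 0) (hde6 : d e6 = 0) (hde7 : d e7 = 0) :
    -- the degree-1 cocycles are exactly the span of `e5, e6`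
    (∀ a ∈ 𝒜 1, d a = 0 ↔ a ∈ Submodule.span ℚ {e5, e6}) ∧
    -- there are no nonzero coboundaries in degree 1
    (∀ a ∈ 𝒜 1, a ∈ LinearMap.range d → a = 0) ∧
    -- the classes of `e5, e6` are linearly independent, so `dim H¹(A) = 2`
    LinearIndependent ℚ ![e5, e6] := by

  -- preliminaries
  have hd1 : d (1:A) = 0 := by
    have h := hleib 0 1 1 (SetLike.one_mem_graded 𝒜)
    simp only [pow_zero, one_smul, mul_one, one_mul] at h
    exact add_left_cancel (h.symm.trans (add_zero (d 1)).symm)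
  refine ⟨?_, ?_, ?_⟩
  · -- cocycles
    intro a ha
    rw [hspan1, Submodule.mem_span_range_iff_exists_fun] at ha
    obtain ⟨c, hc⟩ := ha
    have hda : d a = -((c 0) • (e1*e6) + (c 1) • (e2*e6) + (c 2) • (e3*e6) + (c 3) • (e5*e6)) := by
      rw [← hc, map_sum]
      simp only [map_smul, Fin.sum_univ_six]
      rw [show (![e1, e2, e3, e4, e5, e6] 5 : A) = e6 from rfl,
        show (![e1, e2, e3, e4, e5, e6] 4 : A) = e5 from rfl]
      simp [hde1, hde2, hde3, hde4, hde5, hde6]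
      abel
    constructor
    · intro h0
      rw [hda, neg_eq_zero] at h0
      have hz := Fintype.linearIndependent_iff.mp hind2 ![c 0, c 1, c 2, c 3] ?_
      · have h5 : a = (c 4) • e5 + (c 5) • e6 := by
          rw [← hc, Fin.sum_univ_six]
          have h0' := hz 0; have h1' := hz 1; have h2' := hz 2; have h3' := hz 3
          simp only [Matrix.cons_val_zero, Matrix.cons_val_one, Matrix.head_cons,
            Matrix.cons_val_two, Matrix.tail_cons, Matrix.cons_val_three] at h0' h1' h2' h3'
          rw [show (![e1, e2, e3, e4, e5, e6] 5 : A) = e6 from rfl,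
            show (![e1, e2, e3, e4, e5, e6] 4 : A) = e5 from rfl]
          simp [h0', h1', h2', h3']
        rw [h5]
        exact Submodule.add_mem _
          (Submodule.smul_mem _ _ (Submodule.subset_span (by simp)))
          (Submodule.smul_mem _ _ (Submodule.subset_span (by simp)))
      · rw [Fin.sum_univ_four]
        simpa using h0
    · intro hmem
      obtain ⟨m, n, hmn⟩ := Submodule.mem_span_pair.mp hmem
      rw [← hmn]
      simp [hde5, hde6]
  · -- no coboundaries in degree 1
    rintro a ha ⟨b, hb⟩
    classical
    set P : A →ₗ[ℚ] A :=
      (𝒜 1).subtype ∘ₗ (DFinsupp.lapply 1) ∘ₗ (DirectSum.decomposeAlgEquiv 𝒜).toLinearMap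
      with hP
    have hPdef : ∀ x : A, P x = (DirectSum.decompose 𝒜 x 1 : A) := fun x => rfl
    have hdb0 : d (DirectSum.decompose 𝒜 b 0 : A) = 0 := by
      have key : ∀ x ∈ 𝒜 0, d x = 0 := by
        intro x hx
        rw [hconn, Submodule.mem_one] at hx
        obtain ⟨q, hq⟩ := hx
        simp only [← hq, Algebra.algebraMap_eq_smul_one, map_smul, hd1, smul_zero]
      exact key _ (SetLike.coe_mem _)
    have h1 : a = ∑ i ∈ (DirectSum.decompose 𝒜 b).support,
        d (DirectSum.decompose 𝒜 b i : A) := by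
      conv_lhs => rw [← hb, ← DirectSum.sum_support_decompose 𝒜 b]
      rw [map_sum]
    have h2 : ∀ i ∈ (DirectSum.decompose 𝒜 b).support,
        P (d (DirectSum.decompose 𝒜 b i : A)) = 0 := by
      intro i _
      rcases Nat.eq_zero_or_pos i with hi | hi
      · subst hi
        rw [hPdef, hdb0]
        simp
      · rw [hPdef]
        exact DirectSum.decompose_of_mem_ne 𝒜
          (hddeg i _ (SetLike.coe_mem _)) (by omega)
    have h3 : P a = a := by rw [hPdef]; exact DirectSum.decompose_of_mem_same 𝒜 ha
    calc a = P a := h3.symm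
      _ = ∑ i ∈ (DirectSum.decompose 𝒜 b).support,
            P (d (DirectSum.decompose 𝒜 b i : A)) := by rw [← map_sum, ← h1]
      _ = 0 := Finset.sum_eq_zero h2
  · -- linear independence of e5, e6
    have hf : ![e5, e6] = ![e1, e2, e3, e4, e5, e6] ∘ (![4, 5] : Fin 2 → Fin 6) := by
      funext i; fin_cases i <;> rfl
    rw [hf]
    exact hind1.comp _ (by decide)
end

section
/- Let A be the free GCDA of the previous example (generators e₁,…,e₆ of degree 1, e₇ of degree 2, with d(eᵢ) = −eᵢe₆ for i = 1,2,3, d(e₄) = −e₅e₆, d(e₅) = d(e₆) = d(e₇) = 0). Then H²(A) is 3-dimensional with basis the classes of e₄∧e₅, e₄∧e₆, and e₇. -/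
/-- For the free GCDA `A` of the previous example (generators
`e1, …, e6` of degree 1, `e7` of degree 2, `d ei = -ei*e6` for `i = 1,2,3`,
`d e4 = -e5*e6`, `d e5 = d e6 = d e7 = 0`), `H²(A)` is 3-dimensional with
basis the classes of `e4∧e5`, `e4∧e6` and `e7`. -/
theorem stmt_9 {A : Type*} [Ring A] [Algebra ℚ A]
    (𝒜 : ℕ → Submodule ℚ A) [GradedAlgebra 𝒜]
    (d : A →ₗ[ℚ] A)
    (hd2 : ∀ a, d (d a) = 0)
    (hddeg : ∀ i, ∀ a ∈ 𝒜 i, d a ∈ 𝒜 (i + 1))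
    (hcomm : ∀ (i j : ℕ) (a b : A), a ∈ 𝒜 i → b ∈ 𝒜 j →
      a * b = ((-1 : ℚ)) ^ (i * j) • (b * a))
    (hleib : ∀ (i : ℕ) (a b : A), a ∈ 𝒜 i →
      d (a * b) = d a * b + ((-1 : ℚ)) ^ i • (a * d b))
    (e1 e2 e3 e4 e5 e6 e7 : A)
    (he1 : e1 ∈ 𝒜 1) (he2 : e2 ∈ 𝒜 1) (he3 : e3 ∈ 𝒜 1) (he4 : e4 ∈ 𝒜 1)
    (he5 : e5 ∈ 𝒜 1) (he6 : e6 ∈ 𝒜 1) (he7 : e7 ∈ 𝒜 2)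
    (hconn : 𝒜 0 = (1 : Submodule ℚ A))
    (hspan1 : 𝒜 1 = Submodule.span ℚ (Set.range ![e1, e2, e3, e4, e5, e6]))
    (hind1 : LinearIndependent ℚ ![e1, e2, e3, e4, e5, e6])
    -- freeness in degree 2: the quadratic monomials together with `e7` form a
    -- basis of `A²`
    (hspan2 : 𝒜 2 = Submodule.span ℚ (Set.range
      ![e1 * e2, e1 * e3, e1 * e4, e1 * e5, e1 * e6, e2 * e3, e2 * e4,
        e2 * e5, e2 * e6, e3 * e4, e3 * e5, e3 * e6, e4 * e5, e4 * e6,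
        e5 * e6, e7]))
    (hind2 : LinearIndependent ℚ
      ![e1 * e2, e1 * e3, e1 * e4, e1 * e5, e1 * e6, e2 * e3, e2 * e4,
        e2 * e5, e2 * e6, e3 * e4, e3 * e5, e3 * e6, e4 * e5, e4 * e6,
        e5 * e6, e7])
    -- freeness in degree 3: independence of the cubic monomials appearing in
    -- differentials of degree-2 elements
    (hind3 : LinearIndependent ℚ
      ![e1 * e2 * e6, e1 * e3 * e6, e2 * e3 * e6, e1 * e4 * e6,
        e1 * e5 * e6, e2 * e4 * e6, e2 * e5 * e6, e3 * e4 * e6,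
        e3 * e5 * e6])
    (hde1 : d e1 = -(e1 * e6)) (hde2 : d e2 = -(e2 * e6))
    (hde3 : d e3 = -(e3 * e6)) (hde4 : d e4 = -(e5 * e6))
    (hde5 : d e5 = 0) (hde6 : d e6 = 0) (hde7 : d e7 = 0) :
    -- `e4*e5`, `e4*e6`, `e7` are cocycles
    (d (e4 * e5) = 0 ∧ d (e4 * e6) = 0 ∧ d e7 = 0) ∧
    -- every degree-2 cocycle is, up to a coboundary, in their span
    (∀ a ∈ 𝒜 2, d a = 0 →
      ∃ b ∈ Submodule.span ℚ {e4 * e5, e4 * e6, e7},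
        a - b ∈ LinearMap.range d) ∧
    -- their classes are linearly independent in `H²(A)`
    (∀ b ∈ Submodule.span ℚ {e4 * e5, e4 * e6, e7},
      b ∈ LinearMap.range d → b = 0) ∧
    LinearIndependent ℚ ![e4 * e5, e4 * e6, e7] := by
  -- basic graded-commutativity consequences
  have sq0 : ∀ a ∈ 𝒜 1, a * a = 0 := by
    intro a ha
    have h := hcomm 1 1 a a ha ha
    simp only [mul_one, pow_one, neg_smul, one_smul] at h
    have h2 : (2:ℚ) • (a*a) = 0 := by rw [two_smul]; nth_rewrite 1 [h]; abel
    simpa using (smul_eq_zero.mp h2).resolve_left (by norm_num)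
  have swap : ∀ a b : A, a ∈ 𝒜 1 → b ∈ 𝒜 1 → a * b = -(b * a) := by
    intro a b ha hb
    simpa using hcomm 1 1 a b ha hb
  have key : ∀ (a b : A), b ∈ 𝒜 1 → (a * e6) * b = -(a * b * e6) := by
    intro a b hb
    rw [mul_assoc, swap e6 b he6 hb, mul_neg, mul_assoc]
  have key6 : ∀ a : A, (a * e6) * e6 = 0 := by
    intro a; rw [mul_assoc, sq0 e6 he6, mul_zero]
  -- differentials of the quadratic monomials
  have dm12 : d (e1 * e2) = (2:ℚ) • (e1 * e2 * e6) := by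
    rw [hleib 1 e1 e2 he1, hde1, hde2, neg_mul, key e1 e2 he2, two_smul]
    simp [mul_assoc]
  have dm13 : d (e1 * e3) = (2:ℚ) • (e1 * e3 * e6) := by
    rw [hleib 1 e1 e3 he1, hde1, hde3, neg_mul, key e1 e3 he3, two_smul]
    simp [mul_assoc]
  have dm23 : d (e2 * e3) = (2:ℚ) • (e2 * e3 * e6) := by
    rw [hleib 1 e2 e3 he2, hde2, hde3, neg_mul, key e2 e3 he3, two_smul]
    simp [mul_assoc]
  have dm14 : d (e1 * e4) = e1 * e4 * e6 + e1 * e5 * e6 := by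
    rw [hleib 1 e1 e4 he1, hde1, hde4, neg_mul, key e1 e4 he4]
    simp [mul_assoc]
  have dm24 : d (e2 * e4) = e2 * e4 * e6 + e2 * e5 * e6 := by
    rw [hleib 1 e2 e4 he2, hde2, hde4, neg_mul, key e2 e4 he4]
    simp [mul_assoc]
  have dm34 : d (e3 * e4) = e3 * e4 * e6 + e3 * e5 * e6 := by
    rw [hleib 1 e3 e4 he3, hde3, hde4, neg_mul, key e3 e4 he4]
    simp [mul_assoc]
  have dm15 : d (e1 * e5) = e1 * e5 * e6 := by
    rw [hleib 1 e1 e5 he1, hde1, hde5, neg_mul, key e1 e5 he5]; simp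
  have dm25 : d (e2 * e5) = e2 * e5 * e6 := by
    rw [hleib 1 e2 e5 he2, hde2, hde5, neg_mul, key e2 e5 he5]; simp
  have dm35 : d (e3 * e5) = e3 * e5 * e6 := by
    rw [hleib 1 e3 e5 he3, hde3, hde5, neg_mul, key e3 e5 he5]; simp
  have dm16 : d (e1 * e6) = 0 := by
    rw [hleib 1 e1 e6 he1, hde1, hde6, neg_mul, key6]; simp
  have dm26 : d (e2 * e6) = 0 := by
    rw [hleib 1 e2 e6 he2, hde2, hde6, neg_mul, key6]; simp
  have dm36 : d (e3 * e6) = 0 := by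
    rw [hleib 1 e3 e6 he3, hde3, hde6, neg_mul, key6]; simp
  have dm45 : d (e4 * e5) = 0 := by
    rw [hleib 1 e4 e5 he4, hde4, hde5, neg_mul, key e5 e5 he5, sq0 e5 he5]; simp
  have dm46 : d (e4 * e6) = 0 := by
    rw [hleib 1 e4 e6 he4, hde4, hde6, neg_mul, key6]; simp
  have dm56 : d (e5 * e6) = 0 := by
    rw [hleib 1 e5 e6 he5, hde5, hde6]; simp
  refine ⟨⟨dm45, dm46, hde7⟩, ?_, ?_, ?_⟩
  · -- every degree-2 cocycle is, up to coboundary, in the span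
    intro a ha hda
    rw [hspan2] at ha
    obtain ⟨c, hc0⟩ := (Submodule.mem_span_range_iff_exists_fun ℚ).mp ha
    simp only [Fin.sum_univ_succ, Fin.sum_univ_zero, Matrix.cons_val_zero, Matrix.cons_val_succ,
      add_zero] at hc0
    have hc : c 0 • (e1 * e2) + (c 1 • (e1 * e3) + (c 2 • (e1 * e4) + (c 3 • (e1 * e5) +
        (c 4 • (e1 * e6) + (c 5 • (e2 * e3) + (c 6 • (e2 * e4) + (c 7 • (e2 * e5) +
        (c 8 • (e2 * e6) + (c 9 • (e3 * e4) + (c 10 • (e3 * e5) + (c 11 • (e3 * e6) +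
        (c 12 • (e4 * e5) + (c 13 • (e4 * e6) + (c 14 • (e5 * e6) + c 15 • e7)))))))))))))) = a :=
      hc0
    clear hc0
    rw [← hc] at hda
    simp only [map_add, map_smul, dm12, dm13, dm23, dm14, dm24, dm34, dm15, dm25, dm35,
      dm16, dm26, dm36, dm45, dm46, dm56, hde7, smul_zero, add_zero, smul_smul] at hda
    have hsum : ∑ i, (![2*c 0, 2*c 1, 2*c 5, c 2, c 2 + c 3, c 6, c 6 + c 7, c 9, c 9 + c 10] : Fin 9 → ℚ) i •
        (![e1 * e2 * e6, e1 * e3 * e6, e2 * e3 * e6, e1 * e4 * e6,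
          e1 * e5 * e6, e2 * e4 * e6, e2 * e5 * e6, e3 * e4 * e6,
          e3 * e5 * e6] : Fin 9 → A) i = 0 := by
      simp only [Fin.sum_univ_succ, Fin.sum_univ_zero, Matrix.cons_val_zero, Matrix.cons_val_succ,
        add_zero]
      rw [← hda]; module
    have hg := Fintype.linearIndependent_iff.mp hind3 _ hsum
    have h0 : c 0 = 0 := by have : 2 * c 0 = 0 := hg 0; linarith
    have h1 : c 1 = 0 := by have : 2 * c 1 = 0 := hg 1; linarith
    have h5 : c 5 = 0 := by have : 2 * c 5 = 0 := hg 2; linarith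
    have h2 : c 2 = 0 := hg 3
    have h3 : c 3 = 0 := by have : c 2 + c 3 = 0 := hg 4; linarith
    have h6 : c 6 = 0 := hg 5
    have h7 : c 7 = 0 := by have : c 6 + c 7 = 0 := hg 6; linarith
    have h9 : c 9 = 0 := hg 7
    have h10 : c 10 = 0 := by have : c 9 + c 10 = 0 := hg 8; linarith
    refine ⟨c 12 • (e4 * e5) + c 13 • (e4 * e6) + c 15 • e7, ?_, ?_⟩
    · exact add_mem (add_mem (Submodule.smul_mem _ _ (Submodule.subset_span (by simp)))
        (Submodule.smul_mem _ _ (Submodule.subset_span (by simp))))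
        (Submodule.smul_mem _ _ (Submodule.subset_span (by simp)))
    · refine ⟨-(c 4 • e1 + c 8 • e2 + c 11 • e3 + c 14 • e4), ?_⟩
      rw [← hc, h0, h1, h2, h3, h5, h6, h7, h9, h10]
      simp only [map_neg, map_add, map_smul, hde1, hde2, hde3, hde4, zero_smul, zero_add]
      module
  · -- no nonzero element of the span is a coboundary
    have comp : ∀ x : A, (DirectSum.decompose 𝒜 (d x) 2 : A)
        = d ((DirectSum.decompose 𝒜 x 1 : 𝒜 1) : A) := by
      refine DirectSum.Decomposition.inductionOn 𝒜 ?_ ?_ ?_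
      · simp
      · rintro i ⟨m, hm⟩
        by_cases hi : i = 1
        · subst hi
          rw [DirectSum.decompose_of_mem_same 𝒜 hm,
            DirectSum.decompose_of_mem_same 𝒜 (hddeg 1 m hm)]
        · rw [DirectSum.decompose_of_mem_ne 𝒜 hm hi,
            DirectSum.decompose_of_mem_ne 𝒜 (hddeg i m hm) (by omega), map_zero]
      · intro m m' hm hm'
        rw [map_add d m m', DirectSum.decompose_add, DirectSum.decompose_add,
          DirectSum.add_apply, DirectSum.add_apply, Submodule.coe_add, Submodule.coe_add,
          hm, hm', map_add]
    intro b hb hbr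
    obtain ⟨x, hx⟩ := hbr
    have hb2 : b ∈ 𝒜 2 := by
      refine Submodule.span_le.mpr ?_ hb
      rintro y (rfl | rfl | rfl)
      · exact SetLike.mul_mem_graded he4 he5
      · exact SetLike.mul_mem_graded he4 he6
      · exact he7
    obtain ⟨y, hy1, hbd⟩ : ∃ y ∈ 𝒜 1, b = d y := by
      refine ⟨_, (DirectSum.decompose 𝒜 x 1).2, ?_⟩
      rw [← comp x, hx, DirectSum.decompose_of_mem_same 𝒜 hb2]
    rw [hspan1] at hy1
    obtain ⟨t, ht0⟩ := (Submodule.mem_span_range_iff_exists_fun ℚ).mp hy1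
    simp only [Fin.sum_univ_succ, Fin.sum_univ_zero, Matrix.cons_val_zero, Matrix.cons_val_succ,
      add_zero] at ht0
    have ht : t 0 • e1 + (t 1 • e2 + (t 2 • e3 + (t 3 • e4 + (t 4 • e5 + t 5 • e6))))
        = y := ht0
    clear ht0
    rw [← ht] at hbd
    simp only [map_add, map_smul, hde1, hde2, hde3, hde4, hde5, hde6, smul_zero, add_zero,
      smul_neg] at hbd
    -- write b in terms of the generators of the span
    rw [show ({e4 * e5, e4 * e6, e7} : Set A) = insert (e4 * e5) (insert (e4 * e6) {e7})
      from rfl] at hb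
    obtain ⟨α, z, hz, hbz⟩ := Submodule.mem_span_insert.mp hb
    obtain ⟨β, w, hw, hzw⟩ := Submodule.mem_span_insert.mp hz
    obtain ⟨γ, hγ⟩ := Submodule.mem_span_singleton.mp hw
    subst hbz hzw
    rw [← hγ] at hbd ⊢
    have hsum : ∑ i, (![0, 0, 0, 0, t 0, 0, 0, 0, t 1, 0, 0, t 2, α, β, t 3, γ] : Fin 16 → ℚ) i •
        (![e1 * e2, e1 * e3, e1 * e4, e1 * e5, e1 * e6, e2 * e3, e2 * e4,
          e2 * e5, e2 * e6, e3 * e4, e3 * e5, e3 * e6, e4 * e5, e4 * e6,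
          e5 * e6, e7] : Fin 16 → A) i = 0 := by
      simp only [Fin.sum_univ_succ, Fin.sum_univ_zero, Matrix.cons_val_zero, Matrix.cons_val_succ,
        add_zero, zero_smul, zero_add]
      linear_combination (norm := module) hbd
    have hg := Fintype.linearIndependent_iff.mp hind2 _ hsum
    have hα : α = 0 := hg 12
    have hβ : β = 0 := hg 13
    have hγ' : γ = 0 := hg 15
    rw [hα, hβ, hγ']
    simp
  · -- linear independence of the three classes
    have hf : Function.Injective (![12, 13, 15] : Fin 3 → Fin 16) := by decide
    have h := hind2.comp ![12, 13, 15] hf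
    have heq : ![e4 * e5, e4 * e6, e7] =
        (![e1 * e2, e1 * e3, e1 * e4, e1 * e5, e1 * e6, e2 * e3, e2 * e4,
          e2 * e5, e2 * e6, e3 * e4, e3 * e5, e3 * e6, e4 * e5, e4 * e6,
          e5 * e6, e7] : Fin 16 → A) ∘ ![12, 13, 15] := by
      funext i
      fin_cases i <;> rfl
    rw [heq]
    exact h
end

section
/- Let M = Λ(x₀, x₁, y) ⊗ ℚ[x₂] with |x₀| = |x₁| = |y| = 1, |x₂| = 2, d(x₀) = d(x₁) = d(x₂) = 0, and d(y) = x₀∧x₁. Then H¹(M) is spanned by [x₀], [x₁]; H²(M) is spanned by [x₀∧y], [x₁∧y], [x₂]; and H³(M) is spanned by [x₀∧x₁∧y], [x₀∧x₂], [x₁∧x₂]. -/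
lemma stmt10_proj {M : Type*} [Ring M] [Algebra ℚ M]
    (𝒜 : ℕ → Submodule ℚ M) [GradedAlgebra 𝒜]
    (d : M →ₗ[ℚ] M) (hddeg : ∀ i, ∀ a ∈ 𝒜 i, d a ∈ 𝒜 (i + 1))
    (n : ℕ) (a : M) (ha : a ∈ 𝒜 (n + 1)) (b : M) (hb : d b = a) :
    ∃ c ∈ 𝒜 n, d c = a := by
  classical
  refine ⟨(DirectSum.decompose 𝒜 b n : M), SetLike.coe_mem _, ?_⟩
  have hsum := DirectSum.sum_support_decompose 𝒜 b
  have h1 : a = ∑ i ∈ (DirectSum.decompose 𝒜 b).support,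
      d (DirectSum.decompose 𝒜 b i : M) := by
    rw [← hb]
    conv_lhs => rw [← hsum]
    rw [map_sum]
  have h2 : a = ∑ i ∈ (DirectSum.decompose 𝒜 b).support,
      (DirectSum.decompose 𝒜 (d (DirectSum.decompose 𝒜 b i : M)) (n + 1) : M) := by
    conv_lhs => rw [← DirectSum.decompose_of_mem_same 𝒜 ha]
    rw [h1, DirectSum.decompose_sum, DFinsupp.finset_sum_apply,
      AddSubmonoidClass.coe_finset_sum]
  rw [h2]
  rw [Finset.sum_eq_single n]
  · exact (DirectSum.decompose_of_mem_same 𝒜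
      (hddeg n _ (SetLike.coe_mem _))).symm
  · intro i _ hi
    exact DirectSum.decompose_of_mem_ne 𝒜
      (hddeg i _ (SetLike.coe_mem _)) (by omega)
  · intro hn
    rw [DFinsupp.notMem_support_iff.mp hn]
    simp

lemma stmt10_mem_span_triple {M : Type*} [AddCommGroup M] [Module ℚ M] (a b c : M) (p q r : ℚ) :
    p • a + q • b + r • c ∈ Submodule.span ℚ {a, b, c} := by
  refine Submodule.add_mem _ (Submodule.add_mem _ ?_ ?_) ?_ <;>
    exact Submodule.smul_mem _ _ (Submodule.subset_span (by simp))

lemma stmt10_span_triple_repr {M : Type*} [AddCommGroup M] [Module ℚ M] {a b c z : M}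
    (h : z ∈ Submodule.span ℚ {a, b, c}) : ∃ p q r : ℚ, z = p • a + q • b + r • c := by
  rw [Submodule.mem_span_insert] at h
  obtain ⟨p, w, hw, rfl⟩ := h
  rw [Submodule.mem_span_insert] at hw
  obtain ⟨q, u, hu, rfl⟩ := hw
  rw [Submodule.mem_span_singleton] at hu
  obtain ⟨r, rfl⟩ := hu
  exact ⟨p, q, r, by abel⟩



/-- Let `M = Λ(x₀, x₁, y) ⊗ ℚ[x₂]` with `x₀, x₁, y` of degree 1,
`x₂` of degree 2, `d x₀ = d x₁ = d x₂ = 0` and `d y = x₀*x₁`.  Then `H¹(M)` is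
spanned by `[x₀], [x₁]`; `H²(M)` is spanned by `[x₀*y], [x₁*y], [x₂]`; and
`H³(M)` is spanned by `[x₀*x₁*y], [x₀*x₂], [x₁*x₂]`, with the indicated classes
linearly independent in each degree.  (Freeness of `M` is expressed by the
monomial basis hypotheses in each relevant degree.) -/
theorem stmt_10 {M : Type*} [Ring M] [Algebra ℚ M]
    (𝒜 : ℕ → Submodule ℚ M) [GradedAlgebra 𝒜]
    (d : M →ₗ[ℚ] M)
    (hd2 : ∀ a, d (d a) = 0)
    (hddeg : ∀ i, ∀ a ∈ 𝒜 i, d a ∈ 𝒜 (i + 1))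
    (hcomm : ∀ (i j : ℕ) (a b : M), a ∈ 𝒜 i → b ∈ 𝒜 j →
      a * b = ((-1 : ℚ)) ^ (i * j) • (b * a))
    (hleib : ∀ (i : ℕ) (a b : M), a ∈ 𝒜 i →
      d (a * b) = d a * b + ((-1 : ℚ)) ^ i • (a * d b))
    (x0 x1 y x2 : M)
    (hx0 : x0 ∈ 𝒜 1) (hx1 : x1 ∈ 𝒜 1) (hy : y ∈ 𝒜 1) (hx2 : x2 ∈ 𝒜 2)
    (hconn : 𝒜 0 = (1 : Submodule ℚ M))
    (hspan1 : 𝒜 1 = Submodule.span ℚ (Set.range ![x0, x1, y]))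
    (hind1 : LinearIndependent ℚ ![x0, x1, y])
    (hspan2 : 𝒜 2 = Submodule.span ℚ (Set.range ![x0 * x1, x0 * y, x1 * y, x2]))
    (hind2 : LinearIndependent ℚ ![x0 * x1, x0 * y, x1 * y, x2])
    (hspan3 : 𝒜 3 = Submodule.span ℚ
      (Set.range ![x0 * x1 * y, x0 * x2, x1 * x2, y * x2]))
    (hind3 : LinearIndependent ℚ ![x0 * x1 * y, x0 * x2, x1 * x2, y * x2])
    (hind4 : x0 * x1 * x2 ≠ 0)
    (hdx0 : d x0 = 0) (hdx1 : d x1 = 0) (hdx2 : d x2 = 0)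
    (hdy : d y = x0 * x1) :
    -- `H¹(M)` is spanned by the classes of `x0, x1`
    ((∀ a ∈ 𝒜 1, d a = 0 ↔ a ∈ Submodule.span ℚ {x0, x1}) ∧
     (∀ a ∈ 𝒜 1, a ∈ LinearMap.range d → a = 0) ∧
     LinearIndependent ℚ ![x0, x1]) ∧
    -- `H²(M)` is spanned by the classes of `x0*y, x1*y, x2`
    ((∀ a ∈ 𝒜 2, d a = 0 →
        ∃ b ∈ Submodule.span ℚ {x0 * y, x1 * y, x2},
          a - b ∈ LinearMap.range d) ∧
     (∀ b ∈ Submodule.span ℚ {x0 * y, x1 * y, x2},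
        b ∈ LinearMap.range d → b = 0) ∧
     LinearIndependent ℚ ![x0 * y, x1 * y, x2]) ∧
    -- `H³(M)` is spanned by the classes of `x0*x1*y, x0*x2, x1*x2`
    ((∀ a ∈ 𝒜 3, d a = 0 ↔
        a ∈ Submodule.span ℚ {x0 * x1 * y, x0 * x2, x1 * x2}) ∧
     (∀ a ∈ 𝒜 3, a ∈ LinearMap.range d → a = 0) ∧
     LinearIndependent ℚ ![x0 * x1 * y, x0 * x2, x1 * x2]) := by
  classical
  -- basic sign identities
  have hmul11 : ∀ a b : M, a ∈ 𝒜 1 → b ∈ 𝒜 1 → a * b = -(b * a) := by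
    intro a b ha hb
    have := hcomm 1 1 a b ha hb
    simpa using this
  have hsq : ∀ a : M, a ∈ 𝒜 1 → a * a = 0 := by
    intro a ha
    have h := hmul11 a a ha ha
    have h2 : (2 : ℚ) • (a * a) = 0 := by
      rw [two_smul]; nth_rewrite 2 [h]; rw [add_neg_cancel]
    simpa using (smul_eq_zero.mp h2).resolve_left (by norm_num)
  have hx00 : x0 * x0 = 0 := hsq x0 hx0
  have hx11 : x1 * x1 = 0 := hsq x1 hx1
  have hd1 : d (1 : M) = 0 := by
    have h1 : (1 : M) ∈ 𝒜 0 := SetLike.one_mem_graded 𝒜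
    have h := hleib 0 1 1 h1
    simp only [mul_one, one_mul, pow_zero, one_smul] at h
    nth_rewrite 1 [← add_zero (d 1)] at h
    exact (add_left_cancel h).symm
  -- closedness computations
  have hd01 : d (x0 * x1) = 0 := by
    rw [hleib 1 x0 x1 hx0, hdx0, hdx1]; simp
  have hx0dy : x0 * (x0 * x1) = 0 := by rw [← mul_assoc, hx00, zero_mul]
  have hx1dy : x1 * (x0 * x1) = 0 := by
    rw [← mul_assoc, hmul11 x1 x0 hx1 hx0, neg_mul, mul_assoc, hx11, mul_zero, neg_zero]
  have hd0y : d (x0 * y) = 0 := by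
    rw [hleib 1 x0 y hx0, hdx0, hdy]; simp [hx0dy]
  have hd1y : d (x1 * y) = 0 := by
    rw [hleib 1 x1 y hx1, hdx1, hdy]; simp [hx1dy]
  have hd01y : d (x0 * x1 * y) = 0 := by
    rw [hleib 2 (x0 * x1) y (SetLike.mul_mem_graded hx0 hx1), hd01, hdy, zero_mul, zero_add,
      mul_assoc, hx1dy, mul_zero, smul_zero]
  have hd02 : d (x0 * x2) = 0 := by
    rw [hleib 1 x0 x2 hx0, hdx0, hdx2]; simp
  have hd12 : d (x1 * x2) = 0 := by
    rw [hleib 1 x1 x2 hx1, hdx1, hdx2]; simp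
  have hdy2 : d (y * x2) = x0 * x1 * x2 := by
    rw [hleib 1 y x2 hy, hdy, hdx2]; simp
  have hne01 : x0 * x1 ≠ 0 := by
    have := hind2.ne_zero 0; simpa using this
  refine ⟨⟨?_, ?_, ?_⟩, ⟨?_, ?_, ?_⟩, ⟨?_, ?_, ?_⟩⟩
  -- H¹ kernel
  · intro a ha
    rw [hspan1, Submodule.mem_span_range_iff_exists_fun ℚ] at ha
    obtain ⟨c, hc⟩ := ha
    rw [Fin.sum_univ_three] at hc
    simp only [Matrix.cons_val_zero, Matrix.cons_val_one, Matrix.head_cons,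
      Matrix.cons_val_two, Matrix.tail_cons] at hc
    constructor
    · intro hda
      have heq : d a = c 2 • (x0 * x1) := by
        rw [← hc]; simp [hdx0, hdx1, hdy]
      rw [hda] at heq
      have hc2 : c 2 = 0 := (smul_eq_zero.mp heq.symm).resolve_right hne01
      rw [Submodule.mem_span_pair]
      exact ⟨c 0, c 1, by rw [← hc, hc2, zero_smul, add_zero]⟩
    · intro hmem
      obtain ⟨p, q, hpq⟩ := Submodule.mem_span_pair.mp hmem
      rw [← hpq]; simp [hdx0, hdx1]
  -- H¹ exactness
  · rintro a ha ⟨b, hb⟩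
    obtain ⟨c, hc0, hdc⟩ := stmt10_proj 𝒜 d hddeg 0 a ha b hb
    rw [hconn, Submodule.mem_one] at hc0
    obtain ⟨q, hq⟩ := hc0
    rw [← hdc, ← hq, Algebra.algebraMap_eq_smul_one, map_smul, hd1, smul_zero]
  -- H¹ independence
  · have h : ![x0, x1] = ![x0, x1, y] ∘ Fin.castSucc := by
      funext i; fin_cases i <;> rfl
    rw [h]; exact hind1.comp _ (Fin.castSucc_injective _)
  -- H² surjectivity
  · intro a ha _
    rw [hspan2, Submodule.mem_span_range_iff_exists_fun ℚ] at ha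
    obtain ⟨c, hc⟩ := ha
    rw [Fin.sum_univ_four] at hc
    simp only [Matrix.cons_val_zero, Matrix.cons_val_one, Matrix.head_cons,
      Matrix.cons_val_two, Matrix.tail_cons, Matrix.cons_val_three] at hc
    refine ⟨c 1 • (x0 * y) + c 2 • (x1 * y) + c 3 • x2,
      stmt10_mem_span_triple _ _ _ _ _ _, ⟨c 0 • y, ?_⟩⟩
    rw [map_smul, hdy, ← hc]; abel
  -- H² exactness
  · rintro b hb ⟨e, he⟩
    have hb2 : b ∈ 𝒜 2 := by
      revert hb
      refine fun hb => Submodule.span_le.mpr ?_ hb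
      rintro z hz
      simp only [Set.mem_insert_iff, Set.mem_singleton_iff] at hz
      rcases hz with h | h | h <;> subst h
      exacts [SetLike.mul_mem_graded hx0 hy, SetLike.mul_mem_graded hx1 hy, hx2]
    obtain ⟨f, hf1, hdf⟩ := stmt10_proj 𝒜 d hddeg 1 b hb2 e he
    rw [hspan1, Submodule.mem_span_range_iff_exists_fun ℚ] at hf1
    obtain ⟨c, hc⟩ := hf1
    rw [Fin.sum_univ_three] at hc
    simp only [Matrix.cons_val_zero, Matrix.cons_val_one, Matrix.head_cons,
      Matrix.cons_val_two, Matrix.tail_cons] at hc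
    have hbb : b = c 2 • (x0 * x1) := by
      rw [← hdf, ← hc]; simp [hdx0, hdx1, hdy]
    obtain ⟨p, q, r, hpqr⟩ := stmt10_span_triple_repr hb
    have hzero : ∑ i, (![c 2, -p, -q, -r] i) • (![x0 * x1, x0 * y, x1 * y, x2] i) = 0 := by
      rw [Fin.sum_univ_four]
      simp only [Matrix.cons_val_zero, Matrix.cons_val_one, Matrix.head_cons,
        Matrix.cons_val_two, Matrix.tail_cons, Matrix.cons_val_three, neg_smul]
      rw [← hbb]
      nth_rewrite 1 [hpqr]
      abel
    have hall := Fintype.linearIndependent_iff.mp hind2 _ hzero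
    have hp : p = 0 := by have := hall 1; simpa using this
    have hq : q = 0 := by have := hall 2; simpa using this
    have hr : r = 0 := by have := hall 3; simpa using this
    rw [hpqr, hp, hq, hr]
    simp
  -- H² independence
  · have h : ![x0 * y, x1 * y, x2] = ![x0 * x1, x0 * y, x1 * y, x2] ∘ Fin.succ := by
      funext i; fin_cases i <;> rfl
    rw [h]; exact hind2.comp _ (Fin.succ_injective _)
  -- H³ kernel
  · intro a ha
    rw [hspan3, Submodule.mem_span_range_iff_exists_fun ℚ] at ha
    obtain ⟨c, hc⟩ := ha
    rw [Fin.sum_univ_four] at hc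
    simp only [Matrix.cons_val_zero, Matrix.cons_val_one, Matrix.head_cons,
      Matrix.cons_val_two, Matrix.tail_cons, Matrix.cons_val_three] at hc
    have hda : d a = c 3 • (x0 * x1 * x2) := by
      rw [← hc]; simp [hd01y, hd02, hd12, hdy2]
    constructor
    · intro h0
      rw [h0] at hda
      have hc3 : c 3 = 0 := (smul_eq_zero.mp hda.symm).resolve_right hind4
      rw [← hc, hc3, zero_smul, add_zero]
      exact stmt10_mem_span_triple _ _ _ _ _ _
    · intro hmem
      obtain ⟨p, q, r, hpqr⟩ := stmt10_span_triple_repr hmem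
      rw [hpqr]
      simp [hd01y, hd02, hd12]
  -- H³ exactness
  · rintro a ha ⟨b, hb⟩
    obtain ⟨c, hc2, hdc⟩ := stmt10_proj 𝒜 d hddeg 2 a ha b hb
    rw [hspan2, Submodule.mem_span_range_iff_exists_fun ℚ] at hc2
    obtain ⟨g, hg⟩ := hc2
    rw [← hdc, ← hg, Fin.sum_univ_four]
    simp [hd01, hd0y, hd1y, hdx2]
  -- H³ independence
  · have h : ![x0 * x1 * y, x0 * x2, x1 * x2] =
        ![x0 * x1 * y, x0 * x2, x1 * x2, y * x2] ∘ Fin.castSucc := by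
      funext i; fin_cases i <;> rfl
    rw [h]; exact hind3.comp _ (Fin.castSucc_injective _)
end

section
/- Let B be the free GCDA on degree-1 generators x₁,…,x₅ with d(x₁) = 2x₁x₄, d(x₂) = −x₂x₄ − x₃x₅, d(x₃) = −x₃x₄ + x₂x₅, d(x₄) = d(x₅) = 0 (the solvmanifold algebra G^{−2,0}_{5.35}). Then H¹(B) is 2-dimensional, spanned by the classes of x₄ and x₅. -/
/-- Let `B = Λ(x1,…,x5)` on degree-1 generators with
`d x1 = 2x1x4`, `d x2 = -x2x4 - x3x5`, `d x3 = -x3x4 + x2x5`,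
`d x4 = d x5 = 0` (the solvmanifold algebra `G^{-2,0}_{5.35}`).  Then `H¹(B)`
is 2-dimensional, spanned by the classes of `x4` and `x5`. -/
theorem stmt_17 {B : Type*} [Ring B] [Algebra ℚ B]
    (𝒜 : ℕ → Submodule ℚ B) [GradedAlgebra 𝒜]
    (d : B →ₗ[ℚ] B)
    (hd2 : ∀ a, d (d a) = 0)
    (hddeg : ∀ i, ∀ a ∈ 𝒜 i, d a ∈ 𝒜 (i + 1))
    (hcomm : ∀ (i j : ℕ) (a b : B), a ∈ 𝒜 i → b ∈ 𝒜 j →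
      a * b = ((-1 : ℚ)) ^ (i * j) • (b * a))
    (hleib : ∀ (i : ℕ) (a b : B), a ∈ 𝒜 i →
      d (a * b) = d a * b + ((-1 : ℚ)) ^ i • (a * d b))
    (x1 x2 x3 x4 x5 : B)
    (hx1 : x1 ∈ 𝒜 1) (hx2 : x2 ∈ 𝒜 1) (hx3 : x3 ∈ 𝒜 1)
    (hx4 : x4 ∈ 𝒜 1) (hx5 : x5 ∈ 𝒜 1)
    (hconn : 𝒜 0 = (1 : Submodule ℚ B))
    (hspan1 : 𝒜 1 = Submodule.span ℚ (Set.range ![x1, x2, x3, x4, x5]))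
    (hind1 : LinearIndependent ℚ ![x1, x2, x3, x4, x5])
    -- freeness in degree 2 (independence of the quadratic monomials appearing
    -- in differentials of degree-1 elements)
    (hind2 : LinearIndependent ℚ
      ![x1 * x4, x2 * x4, x3 * x4, x2 * x5, x3 * x5])
    (hdx1 : d x1 = (2 : ℚ) • (x1 * x4))
    (hdx2 : d x2 = -(x2 * x4) - x3 * x5)
    (hdx3 : d x3 = -(x3 * x4) + x2 * x5)
    (hdx4 : d x4 = 0) (hdx5 : d x5 = 0) :
    -- the degree-1 cocycles are exactly the span of `x4, x5`
    (∀ a ∈ 𝒜 1, d a = 0 ↔ a ∈ Submodule.span ℚ {x4, x5}) ∧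
    -- there are no nonzero coboundaries in degree 1
    (∀ a ∈ 𝒜 1, a ∈ LinearMap.range d → a = 0) ∧
    -- so the classes of `x4, x5` form a basis of `H¹(B)`
    LinearIndependent ℚ ![x4, x5] := by
  classical
  refine ⟨?_, ?_, ?_⟩
  · -- cocycles
    intro a ha
    constructor
    · intro hda0
      rw [hspan1] at ha
      obtain ⟨c, rfl⟩ := (Submodule.mem_span_range_iff_exists_fun ℚ).mp ha
      have hda : d (∑ i, c i • ![x1, x2, x3, x4, x5] i) =
          (2 * c 0) • (x1 * x4) + (-(c 1)) • (x2 * x4) + (-(c 2)) • (x3 * x4)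
            + (c 2) • (x2 * x5) + (-(c 1)) • (x3 * x5) := by
        rw [map_sum]
        simp only [Fin.sum_univ_five]
        simp only [Matrix.cons_val_zero, Matrix.cons_val_one, Matrix.head_cons,
          Matrix.cons_val_two, Matrix.tail_cons, Matrix.cons_val_three,
          Matrix.cons_val_four, map_smul, hdx1, hdx2, hdx3, hdx4, hdx5]
        module
      have hz : ∑ i, (![2 * c 0, -(c 1), -(c 2), c 2, -(c 1)] : Fin 5 → ℚ) i
          • ![x1 * x4, x2 * x4, x3 * x4, x2 * x5, x3 * x5] i = 0 := by
        rw [Fin.sum_univ_five]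
        simp only [Matrix.cons_val_zero, Matrix.cons_val_one, Matrix.head_cons,
          Matrix.cons_val_two, Matrix.tail_cons, Matrix.cons_val_three,
          Matrix.cons_val_four]
        rw [← hda, hda0]
      have hg := Fintype.linearIndependent_iff.mp hind2 _ hz
      have hc0 : c 0 = 0 := by have := hg 0; simp at this; linarith
      have hc1 : c 1 = 0 := by have := hg 1; simpa using this
      have hc2 : c 2 = 0 := by have := hg 2; simpa using this
      have : (∑ i, c i • ![x1, x2, x3, x4, x5] i) = c 3 • x4 + c 4 • x5 := by
        rw [Fin.sum_univ_five]
        simp [hc0, hc1, hc2]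
      rw [this]
      exact Submodule.mem_span_pair.mpr ⟨c 3, c 4, rfl⟩
    · intro hmem
      obtain ⟨p, q, rfl⟩ := Submodule.mem_span_pair.mp hmem
      simp [map_add, map_smul, hdx4, hdx5]
  · -- no coboundaries
    intro a ha hrange
    obtain ⟨b, hb⟩ := hrange
    have h1mem : (1 : B) ∈ 𝒜 0 := SetLike.one_mem_graded 𝒜
    have hd1 : d (1 : B) = 0 := by
      have h := hleib 0 1 1 h1mem
      simp at h
      exact h
    -- any degree-0 element has zero differential
    have hd0 : ∀ y ∈ 𝒜 0, d y = 0 := by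
      intro y hy
      rw [hconn, Submodule.mem_one] at hy
      obtain ⟨r, rfl⟩ := hy
      rw [Algebra.algebraMap_eq_smul_one, map_smul, hd1, smul_zero]
    -- projection to degree 1
    set π : B → B := fun x => (DirectSum.decompose 𝒜 x 1 : B) with hπ
    have hπa : π a = a := by
      simp only [hπ, DirectSum.decompose_of_mem_same 𝒜 ha]
    have hπadd : ∀ s : Finset ℕ, ∀ f : ℕ → B,
        π (∑ i ∈ s, f i) = ∑ i ∈ s, π (f i) := by
      intro s f
      simp only [hπ]
      rw [DirectSum.decompose_sum, DFinsupp.finset_sum_apply,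
        AddSubmonoidClass.coe_finset_sum]
    have hbsum := DirectSum.sum_support_decompose 𝒜 b
    have : a = ∑ i ∈ (DirectSum.decompose 𝒜 b).support,
        π (d ((DirectSum.decompose 𝒜 b i : B))) := by
      rw [← hπa, ← hb]
      conv_lhs => rw [← hbsum]
      rw [map_sum, hπadd]
    rw [this]
    apply Finset.sum_eq_zero
    intro i _
    rcases eq_or_ne i 0 with h0 | h0
    · subst h0
      rw [hd0 _ (SetLike.coe_mem _)]
      simp [hπ]
    · have hmem2 : d ((DirectSum.decompose 𝒜 b i : B)) ∈ 𝒜 (i + 1) :=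
        hddeg i _ (SetLike.coe_mem _)
      simp only [hπ]
      rw [DirectSum.decompose_of_mem_ne 𝒜 hmem2 (by omega)]
  · -- independence of x4, x5
    have he : ![x4, x5] = ![x1, x2, x3, x4, x5] ∘ ![3, 4] := by
      ext i
      fin_cases i <;> rfl
    rw [he]
    exact hind1.comp _ (by decide)
end
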